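/- Let H be a vertex-minimal finite simple graph with θ(H) ≤ 8 and χ'_s(H) > 20. Then every 3-vertex adjacent only to 4-vertices is adjacent to three 4-vertices each of which has exactly one 3-neighbor. -/

import Mathlib

open SimpleGraph

variable {V : Type*}

/-- Two edges are at distance at most 2 (they "see" each other): distinct and
some endpoint of one equals or is adjacent to some endpoint of the other. -/
def EdgeSees (G : SimpleGraph V) (e e' : Sym2 V) : Prop :=
  e ≠ e' ∧ ∃ a ∈ e, ∃ b ∈ e', a = b ∨ G.Adj a b

/-- `G` admits a strong `N`-edge-coloring. -/
def HasStrongColoring (G : SimpleGraph V) (N : ℕ) : Prop :=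
  ∃ f : G.edgeSet → Fin N, ∀ e e' : G.edgeSet, EdgeSees G e.val e'.val → f e ≠ f e'

/-- `G − v`: delete the vertex `v` (remove all edges incident to it). -/
def DelV (G : SimpleGraph V) (v : V) : SimpleGraph V where
  Adj a b := G.Adj a b ∧ a ≠ v ∧ b ≠ v
  symm := ⟨fun _ _ h => ⟨h.1.symm, h.2.2, h.2.1⟩⟩
  loopless := ⟨fun _ h => G.irrefl h.1⟩

/-! Suppose the neighbour `y` of the 3(D)-vertex `x` had a second 3-neighbour `z`. By minimality
`H - x` has a strong 20-edge-colouring; we extend it greedily to the three edges at `x`.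
An edge `xu` sees at most `3 * 3` coloured edges at the other neighbours of `x`, and at most
`∑ (d(w) - 1) ≤ 3 * 3` coloured edges at the neighbours `w ≠ x` of `u`, since `θ(H) ≤ 8` forces
`d(w) ≤ 4`. For `u = y` the 3-vertex `z` saves one edge, so `xy` sees at most 17 coloured edges.
Colouring `xy` last, each of the three edges has at most 19 forbidden colours, and `H` would be
strongly 20-edge-colourable. -/

open Finset

lemma EdgeSees.symm {G : SimpleGraph V} {e e' : Sym2 V} (h : EdgeSees G e e') :
    EdgeSees G e' e := by
  obtain ⟨hne, a, ha, b, hb, hab⟩ := h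
  exact ⟨hne.symm, b, hb, a, ha, hab.imp Eq.symm fun h => h.symm⟩

lemma mem_edgeSet_delV {G : SimpleGraph V} {x : V} {e : Sym2 V} :
    e ∈ (DelV G x).edgeSet ↔ e ∈ G.edgeSet ∧ x ∉ e := by
  induction e using Sym2.ind with
  | _ a b => simp [DelV, eq_comm]

lemma HasStrongColoring.exists_coloring_delV {G : SimpleGraph V} {x : V} {N : ℕ} [NeZero N]
    (h : HasStrongColoring (DelV G x) N) :
    ∃ φ : Sym2 V → Fin N, ∀ e ∈ G.edgeSet, ∀ e' ∈ G.edgeSet, x ∉ e → x ∉ e' →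
      EdgeSees G e e' → φ e ≠ φ e' := by
  classical
  obtain ⟨f, hf⟩ := h
  refine ⟨fun e => if h : e ∈ (DelV G x).edgeSet then f ⟨e, h⟩ else 0, ?_⟩
  intro e he e' he' hx hx' ⟨hne, a, ha, b, hb, hab⟩
  have hD : e ∈ (DelV G x).edgeSet := mem_edgeSet_delV.2 ⟨he, hx⟩
  have hD' : e' ∈ (DelV G x).edgeSet := mem_edgeSet_delV.2 ⟨he', hx'⟩
  simp only [dif_pos hD, dif_pos hD']
  refine hf _ _ ⟨hne, a, ha, b, hb, hab.imp id fun hadj => ⟨hadj, ?_, ?_⟩⟩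
  · rintro rfl; exact hx ha
  · rintro rfl; exact hx' hb

open Classical in
noncomputable def conflictEdges (G : SimpleGraph V) [Fintype V] [DecidableRel G.Adj] (x u : V) :
    Finset (Sym2 V) :=
  {e ∈ G.edgeFinset | x ∉ e ∧ EdgeSees G s(x, u) e}

section conflicts

variable {G : SimpleGraph V} [Fintype V] [DecidableRel G.Adj] {x u : V}

lemma hasStrongColoring_of_extend {N : ℕ} (φ : Sym2 V → Fin N)
    (hφ : ∀ e ∈ G.edgeSet, ∀ e' ∈ G.edgeSet, x ∉ e → x ∉ e' → EdgeSees G e e' → φ e ≠ φ e')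
    (c : V → Fin N) (hc_inj : Set.InjOn c (G.neighborSet x))
    (hc : ∀ u, G.Adj x u → c u ∉ (conflictEdges G x u).image φ) :
    HasStrongColoring G N := by
  classical
  have adj_other : ∀ {e : Sym2 V} (h : x ∈ e), e ∈ G.edgeSet → G.Adj x (Sym2.Mem.other h) :=
    fun h he => by rwa [← mem_edgeSet, Sym2.other_spec h]
  have hc' : ∀ {e : Sym2 V} (h : x ∈ e), e ∈ G.edgeSet → ∀ e' ∈ G.edgeSet, x ∉ e' →
      EdgeSees G e e' → c (Sym2.Mem.other h) ≠ φ e' := by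
    intro e h he e' he' hx' hsee hce
    refine hc _ (adj_other h he) (mem_image.2 ⟨e', ?_, hce.symm⟩)
    simpa [conflictEdges, Sym2.other_spec h, he', hx'] using hsee
  refine ⟨fun e => if h : x ∈ e.val then c (Sym2.Mem.other h) else φ e, ?_⟩
  rintro ⟨e, he⟩ ⟨e', he'⟩ (hsee : EdgeSees G e e')
  by_cases hx : x ∈ e <;> by_cases hx' : x ∈ e' <;> simp only [hx, hx', dite_true, dite_false]
  · intro heq
    apply hsee.1
    rw [← Sym2.other_spec hx, ← Sym2.other_spec hx',
      hc_inj (adj_other hx he) (adj_other hx' he') heq]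
  · exact hc' hx he e' he' hx' hsee
  · exact (hc' hx' he' e he hx hsee.symm).symm
  · exact hφ e he e' he' hx hx' hsee

lemma card_conflictEdges_le [DecidableEq V] (hxu : G.Adj x u) :
    #(conflictEdges G x u) ≤ ∑ v ∈ G.neighborFinset x, (G.degree v - 1) +
      ∑ w ∈ (G.neighborFinset u).erase x, (G.degree w - 1) := by
  have hsub : conflictEdges G x u ⊆
      (G.neighborFinset x).biUnion (fun v => (G.incidenceFinset v).erase s(v, x)) ∪
      ((G.neighborFinset u).erase x).biUnion (fun w => (G.incidenceFinset w).erase s(w, u)) := by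
    intro e he
    simp only [conflictEdges, mem_filter, mem_edgeFinset] at he
    obtain ⟨he, hxe, -, a, ha, b, hb, hab⟩ := he
    have at_nbr : ∀ v, G.Adj x v → v ∈ e →
        e ∈ (G.neighborFinset x).biUnion (fun v => (G.incidenceFinset v).erase s(v, x)) := by
      intro v hv hve
      refine mem_biUnion.2 ⟨v, (mem_neighborFinset _ _ _).2 hv, mem_erase.2 ⟨?_, ?_⟩⟩
      · rintro rfl; exact hxe (Sym2.mem_mk_right v x)
      · exact (mem_incidenceFinset _ _ _).2 ⟨he, hve⟩
    rcases Sym2.mem_iff.1 ha with rfl | rfl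
    · rcases hab with rfl | hab
      · exact absurd hb hxe
      · exact mem_union_left _ (at_nbr b hab hb)
    · by_cases hae : a ∈ e
      · exact mem_union_left _ (at_nbr a hxu hae)
      rcases hab with rfl | hab
      · exact absurd hb hae
      refine mem_union_right _ (mem_biUnion.2 ⟨b, mem_erase.2 ⟨?_, ?_⟩, mem_erase.2 ⟨?_, ?_⟩⟩)
      · rintro rfl; exact hxe hb
      · exact (mem_neighborFinset _ _ _).2 hab
      · rintro rfl; exact hae (Sym2.mem_mk_right b a)
      · exact (mem_incidenceFinset _ _ _).2 ⟨he, hb⟩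
  have hcard : ∀ v w, G.Adj v w → #((G.incidenceFinset v).erase s(v, w)) = G.degree v - 1 := by
    intro v w h
    rw [card_erase_of_mem (by simpa [mem_incidenceFinset] using h),
      card_incidenceFinset_eq_degree]
  calc #(conflictEdges G x u) ≤ _ := card_le_card hsub
    _ ≤ _ := card_union_le _ _
    _ ≤ _ := add_le_add (card_biUnion_le.trans (sum_le_sum fun v hv => ?_))
        (card_biUnion_le.trans (sum_le_sum fun w hw => ?_))
  · exact (hcard v x ((mem_neighborFinset _ _ _).1 hv).symm).le
  · exact (hcard w u ((mem_neighborFinset _ _ _).1 (mem_of_mem_erase hw)).symm).le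

lemma card_conflictEdges_add_card_filter_le [DecidableEq V]
    (hG : ∀ v w, G.Adj v w → G.degree v + G.degree w ≤ 8) (hx : G.degree x = 3)
    (hnb : ∀ v, G.Adj x v → G.degree v = 4) (hxu : G.Adj x u) :
    #(conflictEdges G x u) + #{w ∈ (G.neighborFinset u).erase x | G.degree w = 3} ≤ 18 := by
  have hu := hnb u hxu
  have at_x : ∑ v ∈ G.neighborFinset x, (G.degree v - 1) = 9 := by
    rw [sum_congr rfl fun v hv => by rw [hnb v ((mem_neighborFinset _ _ _).1 hv)]]
    simp [card_neighborFinset_eq_degree, hx]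
  have at_u : ∑ w ∈ (G.neighborFinset u).erase x, (G.degree w - 1) +
      #{w ∈ (G.neighborFinset u).erase x | G.degree w = 3} ≤ 9 := by
    rw [card_filter, ← sum_add_distrib]
    calc _ ≤ ∑ w ∈ (G.neighborFinset u).erase x, 3 := sum_le_sum fun w hw => by
          have := hG u w ((mem_neighborFinset _ _ _).1 (mem_of_mem_erase hw))
          split_ifs <;> omega
      _ = 9 := by
          rw [sum_const, card_erase_of_mem ((mem_neighborFinset _ _ _).2 hxu.symm),
            card_neighborFinset_eq_degree, hu, smul_eq_mul]
  have := card_conflictEdges_le hxu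
  omega

end conflicts

lemma Finset.exists_nodup_list_of_card_eq_three {α : Type*} [DecidableEq α] {s : Finset α} {y : α}
    (hs : #s = 3) (hy : y ∈ s) : ∃ p q, [p, q, y].Nodup ∧ ∀ u, u ∈ s ↔ u ∈ [p, q, y] := by
  obtain ⟨p, q, hpq, he⟩ := card_eq_two.1 (by rw [card_erase_of_mem hy, hs] : #(s.erase y) = 2)
  have hp : p ≠ y := (mem_erase.1 (he ▸ mem_insert_self p {q})).1
  have hq : q ≠ y := (mem_erase.1 (he ▸ mem_insert_of_mem (mem_singleton_self q))).1
  refine ⟨p, q, by simp [hpq, hp, hq], fun u => ?_⟩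
  rw [← insert_erase hy, he]
  simp only [mem_insert, mem_singleton, List.mem_cons, List.not_mem_nil]
  tauto

lemma exists_injOn_forall_notMem {α β : Type*} [Fintype β] [DecidableEq β] [Nonempty β]
    (F : α → Finset β) (l : List α) (hl : l.Nodup)
    (hF : ∀ (i : ℕ) (hi : i < l.length), #(F l[i]) + i < Fintype.card β) :
    ∃ c : α → β, Set.InjOn c {u | u ∈ l} ∧ ∀ u ∈ l, c u ∉ F u := by
  classical
  induction l using List.reverseRecOn with
  | nil => exact ⟨fun _ => Classical.arbitrary β, by simp, by simp⟩
  | append_singleton l a ih =>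
    obtain ⟨hl, ha⟩ : l.Nodup ∧ a ∉ l := by
      simp only [List.nodup_append, List.nodup_cons, List.mem_singleton] at hl
      exact ⟨hl.1, fun h => hl.2.2 a h a rfl rfl⟩
    obtain ⟨c, hc_inj, hc⟩ := ih hl fun i hi => by
      have := hF i (by simp; omega)
      rwa [List.getElem_append_left hi] at this
    have hcard : #(F a ∪ l.toFinset.image c) < Fintype.card β :=
      calc #(F a ∪ l.toFinset.image c) ≤ #(F a) + l.length :=
            (card_union_le _ _).trans <|
              Nat.add_le_add_left (card_image_le.trans l.toFinset_card_le) _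
        _ < Fintype.card β := by simpa using hF l.length (by simp)
    obtain ⟨b, -, hb⟩ := exists_mem_notMem_of_card_lt_card (t := univ) hcard
    rw [mem_union, not_or, mem_image, not_exists] at hb
    have update_eq : ∀ u ∈ l, Function.update c a b u = c u := fun u hu =>
      Function.update_of_ne (ne_of_mem_of_not_mem hu ha) _ _
    refine ⟨Function.update c a b, ?_, ?_⟩
    · rw [show {u | u ∈ l ++ [a]} = insert a {u | u ∈ l} by ext; simp [or_comm],
        Set.injOn_insert (s := {u | u ∈ l}) ha]
      refine ⟨hc_inj.congr fun u hu => (update_eq u hu).symm, ?_⟩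
      rintro ⟨u, hu, hcu⟩
      rw [update_eq u hu, Function.update_self] at hcu
      exact hb.2 u ⟨List.mem_toFinset.2 hu, hcu⟩
    · simp only [List.mem_append, List.mem_singleton]
      rintro u (hu | rfl)
      · rw [update_eq u hu]; exact hc u hu
      · rw [Function.update_self]; exact hb.1

/-- θ ≤ 8, χ'ₛ > 20: every 3(D)-vertex (3-vertex with all neighbors of degree 4)
is adjacent only to 4(B)-vertices (4-vertices with exactly one 3-neighbor). -/
theorem stmt11 [Fintype V] (H : SimpleGraph V) [DecidableRel H.Adj]
    (hore : ∀ u w, H.Adj u w → H.degree u + H.degree w ≤ 8)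
    (hnc : ¬ HasStrongColoring H 20)
    (hmin : ∀ v, HasStrongColoring (DelV H v) 20) :
    ∀ x, H.degree x = 3 → (∀ y, H.Adj x y → H.degree y = 4) →
      ∀ y, H.Adj x y → {z | H.Adj y z ∧ H.degree z = 3}.ncard = 1 := by
  classical
  intro x hx3 hnb y hxy
  suffices h : ∀ z, H.Adj y z → H.degree z = 3 → z = x by
    rw [show {z | H.Adj y z ∧ H.degree z = 3} = {x} from
      Set.ext fun z => ⟨fun hz => h z hz.1 hz.2, by rintro rfl; exact ⟨hxy.symm, hx3⟩⟩,
      Set.ncard_singleton]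
  intro z hyz hz3
  by_contra hzx
  obtain ⟨φ, hφ⟩ := (hmin x).exists_coloring_delV
  have hbound : ∀ u, H.Adj x u → #((conflictEdges H x u).image φ) +
      #{w ∈ (H.neighborFinset u).erase x | H.degree w = 3} ≤ 18 := fun u hxu =>
    (Nat.add_le_add_right card_image_le _).trans
      (card_conflictEdges_add_card_filter_le hore hx3 hnb hxu)
  have hz : 0 < #{w ∈ (H.neighborFinset y).erase x | H.degree w = 3} :=
    card_pos.2 ⟨z, by simp [hzx, hyz, hz3]⟩
  obtain ⟨p, q, hl, hN⟩ := exists_nodup_list_of_card_eq_three hx3 ((mem_neighborFinset _ _ _).2 hxy)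
  have hadj (u : V) : H.Adj x u ↔ u ∈ [p, q, y] := (mem_neighborFinset _ _ _).symm.trans (hN u)
  have hp := hbound p ((hadj p).2 (by simp))
  have hq := hbound q ((hadj q).2 (by simp))
  have hy := hbound y hxy
  obtain ⟨c, hc_inj, hc⟩ :=
    exists_injOn_forall_notMem (fun u => (conflictEdges H x u).image φ) [p, q, y] hl (by
      intro i hi
      simp only [List.length_cons, List.length_nil] at hi
      interval_cases i <;>
        simp only [List.getElem_cons_zero, List.getElem_cons_succ, Fintype.card_fin] <;> omega)
  exact hnc (hasStrongColoring_of_extend φ hφ c (hc_inj.mono fun u hu => (hadj u).1 hu)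
    fun u hu => hc u ((hadj u).1 hu))
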